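/- arXiv:1411.0091 — 3 statements merged into one kernel-verified Lean document; each statement's English description precedes it below -/
import Mathlib

section
/- Let U be an open subset of ℝⁿ and let X₁, …, X_d be smooth vector fields on U whose real linear span is closed under Lie bracket (i.e., for all i, j there exist real constants c_{ij}^k with [X_i, X_j] = Σ_k c_{ij}^k X_k on U). Assume that there is an integer r such that for every q ∈ U the linear span of X₁(q), …, X_d(q) in ℝⁿ has dimension exactly r. Then for every point p ∈ U there exist an open neighborhood V ⊆ U of p and smooth vector fields Y₁, …, Y_r on V such that: (i) [Y_i, Y_j] = 0 on V for all i, j; (ii) for every q ∈ V the span of Y₁(q), …, Y_r(q) equals the span of X₁(q), …, X_d(q); and (iii) a smooth function f : V → ℝ satisfies X_i f = 0 on V for all i if and only if it satisfies Y_j f = 0 on V for all j. -/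
/-- The action of a vector field `X` on a smooth function `f`:
`(X f)(q) = Df(q)(X(q))`. -/
noncomputable def vAct {n : ℕ} (X : (Fin n → ℝ) → (Fin n → ℝ))
    (f : (Fin n → ℝ) → ℝ) : (Fin n → ℝ) → ℝ :=
  fun q => fderiv ℝ f q (X q)

/-- The Lie bracket of vector fields:
`[X, Y](q) = DY(q)(X(q)) − DX(q)(Y(q))`. -/
noncomputable def vBracket {n : ℕ} (X Y : (Fin n → ℝ) → (Fin n → ℝ)) :
    (Fin n → ℝ) → (Fin n → ℝ) :=
  fun q => fderiv ℝ Y q (X q) - fderiv ℝ X q (Y q)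

open Set Submodule Module Matrix

lemma pick_subfamily {r : ℕ} {M : Type*} [AddCommGroup M] [Module ℝ M] [FiniteDimensional ℝ M]
    {m : Type*} (v : m → M)
    (hr : Module.finrank ℝ (Submodule.span ℝ (Set.range v)) = r) :
    ∃ ι : Fin r → m, LinearIndependent ℝ (fun a => v (ι a)) ∧
      Submodule.span ℝ (Set.range fun a => v (ι a)) = Submodule.span ℝ (Set.range v) := by
  obtain ⟨b, hbsub, hbspan, hbind⟩ := exists_linearIndependent ℝ (Set.range v)
  have hfin : b.Finite := hbind.setFinite
  haveI := hfin.fintype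
  have hcard : Fintype.card b = r := by
    have h1 : finrank ℝ (Submodule.span ℝ b) = b.toFinset.card :=
      finrank_span_set_eq_card hbind
    rw [hbspan, hr] at h1
    rw [Set.toFinset_card] at h1
    omega
  let e : Fin r ≃ b := (Fintype.equivFinOfCardEq hcard).symm
  choose idx hidx using fun (x : b) => (hbsub x.2 : (x : M) ∈ Set.range v)
  have hve : (fun a => v (idx (e a))) = fun a => ((e a : M)) := funext fun a => hidx (e a)
  refine ⟨fun a => idx (e a), ?_, ?_⟩
  · rw [hve]
    exact hbind.comp e e.injective
  · rw [hve]
    have : Set.range (fun a => ((e a : M))) = b := by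
      rw [show (fun a => ((e a : M))) = Subtype.val ∘ e from rfl, Set.range_comp,
        e.range_eq_univ, Set.image_univ, Subtype.range_coe]
    rw [this, hbspan]

lemma contDiffOn_matrix_det {n r : ℕ} {s : Set (Fin n → ℝ)}
    {A : (Fin n → ℝ) → Matrix (Fin r) (Fin r) ℝ}
    (h : ∀ a b, ContDiffOn ℝ (⊤ : ℕ∞) (fun q => A q a b) s) :
    ContDiffOn ℝ (⊤ : ℕ∞) (fun q => (A q).det) s := by
  simp only [Matrix.det_apply']
  apply ContDiffOn.sum
  intro σ _
  exact (contDiffOn_const.mul (contDiffOn_prod fun i _ => h (σ i) i))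

lemma contDiffOn_matrix_inv_entry {n r : ℕ} {s : Set (Fin n → ℝ)}
    {A : (Fin n → ℝ) → Matrix (Fin r) (Fin r) ℝ}
    (h : ∀ a b, ContDiffOn ℝ (⊤ : ℕ∞) (fun q => A q a b) s)
    (hdet : ∀ q ∈ s, (A q).det ≠ 0) (a b : Fin r) :
    ContDiffOn ℝ (⊤ : ℕ∞) (fun q => (A q)⁻¹ a b) s := by
  simp only [Matrix.inv_def, Matrix.smul_apply, smul_eq_mul]
  apply ContDiffOn.mul
  · have : ∀ q ∈ s, Ring.inverse (A q).det = ((A q).det)⁻¹ := fun q _ => Ring.inverse_eq_inv _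
    exact ContDiffOn.congr ((contDiffOn_matrix_det h).inv hdet) this
  · simp only [Matrix.adjugate_apply]
    apply contDiffOn_matrix_det
    intro k l
    simp only [Matrix.updateRow_apply]
    by_cases hk : k = b <;> simp [hk, h, contDiffOn_const]

/-- Constructive Frobenius: a Lie algebra of vector fields of constant rank `r`
is locally spanned by `r` commuting smooth vector fields having the same joint
invariants. -/
theorem frobenius_commuting_local_frame {n d r : ℕ}
    (U : Set (Fin n → ℝ)) (hU : IsOpen U)
    (X : Fin d → (Fin n → ℝ) → (Fin n → ℝ))
    (hXsmooth : ∀ i, ContDiffOn ℝ (⊤ : ℕ∞) (X i) U)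
    (hclosed : ∀ i j, ∃ c : Fin d → ℝ,
      ∀ q ∈ U, vBracket (X i) (X j) q = ∑ k, c k • X k q)
    (hrank : ∀ q ∈ U,
      Module.finrank ℝ (Submodule.span ℝ (Set.range fun i => X i q)) = r) :
    ∀ p ∈ U, ∃ V : Set (Fin n → ℝ), IsOpen V ∧ p ∈ V ∧ V ⊆ U ∧
      ∃ Y : Fin r → (Fin n → ℝ) → (Fin n → ℝ),
        (∀ j, ContDiffOn ℝ (⊤ : ℕ∞) (Y j) V) ∧
        (∀ i j, ∀ q ∈ V, vBracket (Y i) (Y j) q = 0) ∧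
        (∀ q ∈ V, Submodule.span ℝ (Set.range fun j => Y j q) =
          Submodule.span ℝ (Set.range fun i => X i q)) ∧
        (∀ f : (Fin n → ℝ) → ℝ, ContDiffOn ℝ (⊤ : ℕ∞) f V →
          ((∀ i, ∀ q ∈ V, vAct (X i) f q = 0) ↔
            (∀ j, ∀ q ∈ V, vAct (Y j) f q = 0))) := by
  intro p hp
  -- Step 1: pick r indices whose vector fields are independent at p
  obtain ⟨ι, hι_ind, hι_span⟩ := pick_subfamily (fun i => X i p) (hrank p hp)
  -- Step 2: pick r coordinates giving an invertible matrix at p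
  set A : Matrix (Fin r) (Fin n) ℝ := Matrix.of fun a j => X (ι a) p j with hA
  have hArank : finrank ℝ (Submodule.span ℝ (Set.range fun j => Aᵀ j)) = r := by
    have h1 : A.rank = Fintype.card (Fin r) := LinearIndependent.rank_matrix hι_ind
    have h2 := A.rank_eq_finrank_span_cols
    rw [h1, Fintype.card_fin] at h2
    exact h2.symm
  obtain ⟨κ, hκ_ind, -⟩ := pick_subfamily (fun j => Aᵀ j) hArank
  -- the matrix-valued map
  set N : (Fin n → ℝ) → Matrix (Fin r) (Fin r) ℝ :=
    fun q => Matrix.of fun a b => X (ι a) q (κ b) with hN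
  have hNp : (N p).det ≠ 0 := by
    have hP : IsUnit (Matrix.of fun e a => X (ι a) p (κ e)) :=
      Matrix.linearIndependent_rows_iff_isUnit.mp hκ_ind
    have hPt : IsUnit (Matrix.of fun e a => X (ι a) p (κ e))ᵀ :=
      (Matrix.isUnit_transpose _).mpr hP
    have hNu : IsUnit (N p) := by
      convert hPt using 2
      ext i j; rfl
    rw [Matrix.isUnit_iff_isUnit_det, isUnit_iff_ne_zero] at hNu
    exact hNu
  -- Step 3: the open set V
  have hNentry : ∀ a b, ContDiffOn ℝ (⊤ : ℕ∞) (fun q => N q a b) U := by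
    intro a b
    exact (ContinuousLinearMap.proj (R := ℝ) (φ := fun _ : Fin n => ℝ) (κ b)).contDiff.comp_contDiffOn
      (hXsmooth (ι a))
  have hdetcont : ContinuousOn (fun q => (N q).det) U :=
    (contDiffOn_matrix_det hNentry).continuousOn
  set V : Set (Fin n → ℝ) := U ∩ (fun q => (N q).det) ⁻¹' {(0 : ℝ)}ᶜ with hV
  have hVopen : IsOpen V := hdetcont.isOpen_inter_preimage hU isOpen_compl_singleton
  have hVU : V ⊆ U := Set.inter_subset_left
  have hpV : p ∈ V := ⟨hp, hNp⟩
  have hdetV : ∀ q ∈ V, (N q).det ≠ 0 := fun q hq => hq.2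
  -- Step 4: the inverse matrix
  set G : (Fin n → ℝ) → Matrix (Fin r) (Fin r) ℝ := fun q => (N q)⁻¹ with hG
  have hGsmooth : ∀ a b, ContDiffOn ℝ (⊤ : ℕ∞) (fun q => G q a b) V :=
    fun a b => contDiffOn_matrix_inv_entry
      (fun a b => (hNentry a b).mono hVU) hdetV a b
  -- Step 5: the commuting frame
  set Y : Fin r → (Fin n → ℝ) → (Fin n → ℝ) :=
    fun a q => ∑ b, G q a b • X (ι b) q with hY
  have hYsmooth : ∀ a, ContDiffOn ℝ (⊤ : ℕ∞) (Y a) V := by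
    intro a
    apply ContDiffOn.sum
    intro b _
    exact (hGsmooth a b).smul ((hXsmooth (ι b)).mono hVU)
  -- pointwise: components of Y along the κ coordinates
  have hYκ : ∀ q ∈ V, ∀ a e, Y a q (κ e) = if a = e then 1 else 0 := by
    intro q hq a e
    have hNG : G q * N q = 1 :=
      Matrix.nonsing_inv_mul (N q) (isUnit_iff_ne_zero.mpr (hdetV q hq))
    calc Y a q (κ e) = ∑ b, G q a b * N q b e := by
          simp [hY, Finset.sum_apply, hN, Pi.smul_apply, smul_eq_mul]
      _ = (G q * N q) a e := (Matrix.mul_apply).symm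
      _ = if a = e then 1 else 0 := by rw [hNG, Matrix.one_apply]
  -- span facts at each q ∈ V
  have hYmemX : ∀ q ∈ V, ∀ a, Y a q ∈ Submodule.span ℝ (Set.range fun i => X i q) := by
    intro q hq a
    exact Submodule.sum_mem _ fun b _ =>
      Submodule.smul_mem _ _ (Submodule.subset_span ⟨ι b, rfl⟩)
  have hYind : ∀ q ∈ V, LinearIndependent ℝ (fun a => Y a q) := by
    intro q hq
    apply LinearIndependent.of_comp (LinearMap.funLeft ℝ ℝ κ)
    have : (LinearMap.funLeft ℝ ℝ κ ∘ fun a => Y a q) = fun a => Pi.single a (1 : ℝ) := by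
      funext a
      funext e
      simp only [Function.comp_apply, LinearMap.funLeft_apply, Pi.single_apply]
      rw [hYκ q hq a e]
      simp [eq_comm]
    rw [this]
    have h2 := (Pi.basisFun ℝ (Fin r)).linearIndependent
    have h3 : ⇑(Pi.basisFun ℝ (Fin r)) = fun a => Pi.single a (1 : ℝ) :=
      funext fun a => Pi.basisFun_apply ℝ (Fin r) a
    rwa [h3] at h2
  have hspan : ∀ q ∈ V, Submodule.span ℝ (Set.range fun a => Y a q) =
      Submodule.span ℝ (Set.range fun i => X i q) := by
    intro q hq
    apply Submodule.eq_of_le_of_finrank_eq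
    · rw [Submodule.span_le]
      rintro - ⟨a, rfl⟩
      exact hYmemX q hq a
    · rw [finrank_span_eq_card (hYind q hq), Fintype.card_fin, hrank q (hVU hq)]
  -- differentiability facts
  have hZdiff : ∀ c q, q ∈ V → DifferentiableAt ℝ (X (ι c)) q := fun c q hq =>
    ((hXsmooth (ι c)).contDiffAt (hU.mem_nhds (hVU hq))).differentiableAt (by simp)
  have hgdiff : ∀ e c q, q ∈ V → DifferentiableAt ℝ (fun x => G x e c) q := fun e c q hq =>
    ((hGsmooth e c).contDiffAt (hVopen.mem_nhds hq)).differentiableAt (by simp)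
  have hYdiff : ∀ e q, q ∈ V → DifferentiableAt ℝ (Y e) q := fun e q hq =>
    ((hYsmooth e).contDiffAt (hVopen.mem_nhds hq)).differentiableAt (by simp)
  -- derivative of the frame fields
  have hfd : ∀ q ∈ V, ∀ e, fderiv ℝ (Y e) q =
      ∑ c, ((fun x => G x e c) q • fderiv ℝ (X (ι c)) q +
        (fderiv ℝ (fun x => G x e c) q).smulRight (X (ι c) q)) := by
    intro q hq e
    have hYe : Y e = fun x => ∑ c, (fun x => G x e c) x • X (ι c) x := rfl
    rw [hYe, fderiv_fun_sum (A := fun c x => (fun x => G x e c) x • X (ι c) x) (fun c _ => ((hgdiff e c q hq).smul (hZdiff c q hq)))]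
    exact Finset.sum_congr rfl fun c _ => fderiv_smul (hgdiff e c q hq) (hZdiff c q hq)
  have hfd' : ∀ q ∈ V, ∀ e v, fderiv ℝ (Y e) q v =
      ∑ c, (G q e c • (fderiv ℝ (X (ι c)) q v) +
        (fderiv ℝ (fun x => G x e c) q v) • X (ι c) q) := by
    intro q hq e v
    rw [hfd q hq e]
    simp [ContinuousLinearMap.sum_apply, ContinuousLinearMap.add_apply,
      ContinuousLinearMap.coe_smul', Pi.smul_apply, ContinuousLinearMap.smulRight_apply]
  -- the bracket of frame fields lies in the span
  have hbr_mem : ∀ a b, ∀ q ∈ V,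
      vBracket (Y a) (Y b) q ∈ Submodule.span ℝ (Set.range fun i => X i q) := by
    intro a b q hq
    have hZY : ∀ c e, fderiv ℝ (X (ι c)) q (Y e q) =
        ∑ c', G q e c' • fderiv ℝ (X (ι c)) q (X (ι c') q) := by
      intro c e
      show fderiv ℝ (X (ι c)) q (∑ c', G q e c' • X (ι c') q) = _
      rw [map_sum]
      exact Finset.sum_congr rfl fun c' _ => (fderiv ℝ (X (ι c)) q).map_smul _ _
    have hexpr : vBracket (Y a) (Y b) q =
        ((∑ c, (fderiv ℝ (fun x => G x b c) q (Y a q)) • X (ι c) q) -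
          ∑ c, (fderiv ℝ (fun x => G x a c) q (Y b q)) • X (ι c) q)
        + ∑ c, ∑ c', (G q b c * G q a c') •
            (fderiv ℝ (X (ι c)) q (X (ι c') q) - fderiv ℝ (X (ι c')) q (X (ι c) q)) := by
      show fderiv ℝ (Y b) q (Y a q) - fderiv ℝ (Y a) q (Y b q) = _
      rw [hfd' q hq b, hfd' q hq a]
      simp only [hZY]
      rw [Finset.sum_add_distrib, Finset.sum_add_distrib]
      simp only [Finset.smul_sum, smul_smul, smul_sub, Finset.sum_sub_distrib]
      have hswap : (∑ c : Fin r, ∑ c' : Fin r,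
            (G q a c * G q b c') • fderiv ℝ (X (ι c)) q (X (ι c') q))
          = ∑ c : Fin r, ∑ c' : Fin r,
            (G q b c * G q a c') • fderiv ℝ (X (ι c')) q (X (ι c) q) := by
        rw [Finset.sum_comm]
        exact Finset.sum_congr rfl fun c _ => Finset.sum_congr rfl fun c' _ => by
          rw [mul_comm]
      rw [hswap]
      abel
    rw [hexpr]
    apply Submodule.add_mem
    · apply Submodule.sub_mem
      · exact Submodule.sum_mem _ fun c _ =>
          Submodule.smul_mem _ _ (Submodule.subset_span ⟨ι c, rfl⟩)
      · exact Submodule.sum_mem _ fun c _ =>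
          Submodule.smul_mem _ _ (Submodule.subset_span ⟨ι c, rfl⟩)
    · apply Submodule.sum_mem _ fun c _ => Submodule.sum_mem _ fun c' _ => ?_
      apply Submodule.smul_mem
      obtain ⟨coef, hcoef⟩ := hclosed (ι c') (ι c)
      have hbr : fderiv ℝ (X (ι c)) q (X (ι c') q) - fderiv ℝ (X (ι c')) q (X (ι c) q)
          = vBracket (X (ι c')) (X (ι c)) q := rfl
      rw [hbr, hcoef q (hVU hq)]
      exact Submodule.sum_mem _ fun k _ =>
        Submodule.smul_mem _ _ (Submodule.subset_span ⟨k, rfl⟩)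
  -- the κ-components of the bracket vanish
  have hbr_comp : ∀ a b, ∀ q ∈ V, ∀ e, vBracket (Y a) (Y b) q (κ e) = 0 := by
    intro a b q hq e
    have hconst : ∀ e', fderiv ℝ (fun x => Y e' x (κ e)) q = 0 := by
      intro e'
      have hev : (fun x => Y e' x (κ e)) =ᶠ[nhds q]
          (fun _ => if e' = e then (1 : ℝ) else 0) := by
        filter_upwards [hVopen.mem_nhds hq] with x hx
        exact hYκ x hx e' e
      rw [hev.fderiv_eq]
      exact fderiv_const_apply _
    have hcomp : ∀ e' v, fderiv ℝ (Y e') q v (κ e) =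
        fderiv ℝ (fun x => Y e' x (κ e)) q v := by
      intro e' v
      set π : (Fin n → ℝ) →L[ℝ] ℝ :=
        ContinuousLinearMap.proj (R := ℝ) (φ := fun _ : Fin n => ℝ) (κ e) with hπ
      have h1 : HasFDerivAt (fun x => Y e' x (κ e)) (π.comp (fderiv ℝ (Y e') q)) q :=
        π.hasFDerivAt.comp q (hYdiff e' q hq).hasFDerivAt
      rw [h1.fderiv]
      rfl
    show (fderiv ℝ (Y b) q (Y a q) - fderiv ℝ (Y a) q (Y b q)) (κ e) = 0
    rw [Pi.sub_apply, hcomp b _, hcomp a _, hconst a, hconst b]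
    simp
  -- hence the brackets vanish
  have hcomm : ∀ a b, ∀ q ∈ V, vBracket (Y a) (Y b) q = 0 := by
    intro a b q hq
    have hmem : vBracket (Y a) (Y b) q ∈
        Submodule.span ℝ (Set.range fun a => Y a q) := by
      rw [hspan q hq]
      exact hbr_mem a b q hq
    obtain ⟨t, ht⟩ := (mem_span_range_iff_exists_fun ℝ).mp hmem
    have ht0 : ∀ e, t e = 0 := by
      intro e
      have h1 := congrFun ht (κ e)
      rw [hbr_comp a b q hq e] at h1
      rw [← h1, Finset.sum_apply]
      simp only [Pi.smul_apply, smul_eq_mul]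
      rw [Finset.sum_congr rfl (fun c _ => by rw [hYκ q hq c e])]
      simp
    rw [← ht]
    rw [Finset.sum_congr rfl (fun c _ => by rw [ht0 c, zero_smul])]
    simp
  -- invariants
  have hinv : ∀ f : (Fin n → ℝ) → ℝ, ContDiffOn ℝ (⊤ : ℕ∞) f V →
      ((∀ i, ∀ q ∈ V, vAct (X i) f q = 0) ↔ (∀ j, ∀ q ∈ V, vAct (Y j) f q = 0)) := by
    intro f _
    constructor
    · intro hX j q hq
      have hker : Submodule.span ℝ (Set.range fun i => X i q) ≤
          LinearMap.ker (fderiv ℝ f q : (Fin n → ℝ) →ₗ[ℝ] ℝ) := by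
        rw [Submodule.span_le]
        rintro - ⟨i, rfl⟩
        exact hX i q hq
      exact hker (hYmemX q hq j)
    · intro hYf i q hq
      have hker : Submodule.span ℝ (Set.range fun a => Y a q) ≤
          LinearMap.ker (fderiv ℝ f q : (Fin n → ℝ) →ₗ[ℝ] ℝ) := by
        rw [Submodule.span_le]
        rintro - ⟨j, rfl⟩
        exact hYf j q hq
      rw [hspan q hq] at hker
      exact hker (Submodule.subset_span ⟨i, rfl⟩)
  exact ⟨V, hVopen, hpV, hVU, Y, hYsmooth, hcomm, hspan, hinv⟩
end

section
/- Let U be an open subset of ℝⁿ, let r ≤ n, and let X₁, …, X_r be smooth vector fields on U in echelon form, i.e., for each j ≤ r the k-th component of X_j is the constant δ_{jk} for all k ≤ r (so X_j = e_j + Σ_{k=r+1}^n b_{jk} e_k with smooth functions b_{jk}). Suppose that for all i, j there exist smooth functions c₁, …, c_r on U such that [X_i, X_j](q) = Σ_{m=1}^r c_m(q) X_m(q) for every q ∈ U. Then [X_i, X_j] = 0 on U for all i, j. -/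
/-- Vector fields in echelon form whose brackets lie in their pointwise span
(with smooth function coefficients) actually commute. -/
theorem echelon_bracket_in_span_implies_commute {n r : ℕ} (hrn : r ≤ n)
    (U : Set (Fin n → ℝ)) (hU : IsOpen U)
    (X : Fin r → (Fin n → ℝ) → (Fin n → ℝ))
    (hXsmooth : ∀ j, ContDiffOn ℝ (⊤ : ℕ∞) (X j) U)
    (hech : ∀ j : Fin r, ∀ q ∈ U, ∀ k : Fin n, (k : ℕ) < r →
      X j q k = if (j : ℕ) = (k : ℕ) then 1 else 0)
    (hclosed : ∀ i j, ∃ c : Fin r → ((Fin n → ℝ) → ℝ),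
      (∀ m, ContDiffOn ℝ (⊤ : ℕ∞) (c m) U) ∧
      ∀ q ∈ U, vBracket (X i) (X j) q = ∑ m, c m q • X m q) :
    ∀ i j, ∀ q ∈ U, vBracket (X i) (X j) q = 0 := by
  intro i j q hq
  obtain ⟨c, hc, hcspan⟩ := hclosed i j
  have hdiff : ∀ m : Fin r, DifferentiableAt ℝ (X m) q := fun m =>
    ((hXsmooth m).contDiffAt (hU.mem_nhds hq)).differentiableAt (by simp)
  -- key: first r components of any derivative of X m vanish at q
  have key : ∀ (m : Fin r) (v : Fin n → ℝ) (k : Fin n), (k : ℕ) < r →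
      fderiv ℝ (X m) q v k = 0 := by
    intro m v k hk
    have heq : (fun p => X m p k) =ᶠ[nhds q]
        (fun _ => (if (m : ℕ) = (k : ℕ) then (1 : ℝ) else 0)) :=
      Filter.eventuallyEq_of_mem (hU.mem_nhds hq) (fun p hp => hech m p hp k hk)
    have h1 : HasFDerivAt (fun p => X m p k)
        ((ContinuousLinearMap.proj k).comp (fderiv ℝ (X m) q)) q :=
      ((ContinuousLinearMap.proj k).hasFDerivAt.comp q (hdiff m).hasFDerivAt :
        HasFDerivAt ((ContinuousLinearMap.proj k : (Fin n → ℝ) →L[ℝ] ℝ) ∘ X m) _ q)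
    have h2 : HasFDerivAt (fun p => X m p k)
        (0 : (Fin n → ℝ) →L[ℝ] ℝ) q :=
      (hasFDerivAt_const _ _).congr_of_eventuallyEq heq
    have h3 := h1.unique h2
    have : fderiv ℝ (X m) q v k
        = ((ContinuousLinearMap.proj k).comp (fderiv ℝ (X m) q)) v := rfl
    rw [this, h3]
    rfl
  -- first r components of the bracket vanish at q
  have hbr : ∀ k : Fin n, (k : ℕ) < r → vBracket (X i) (X j) q k = 0 := by
    intro k hk
    simp only [vBracket, Pi.sub_apply]
    rw [key j _ k hk, key i _ k hk, sub_zero]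
  -- coefficients vanish at q
  have hc0 : ∀ m : Fin r, c m q = 0 := by
    intro m
    set k : Fin n := ⟨(m : ℕ), lt_of_lt_of_le m.2 hrn⟩ with hkdef
    have hk : (k : ℕ) < r := m.2
    have h := congrFun (hcspan q hq) k
    rw [hbr k hk, Finset.sum_apply] at h
    have hterm : ∀ m' : Fin r, (c m' q • X m' q) k
        = if m' = m then c m' q else 0 := by
      intro m'
      rw [Pi.smul_apply, hech m' q hq k hk]
      by_cases hmm : m' = m
      · subst hmm; simp [hkdef]
      · have : ¬ ((m' : ℕ) = (k : ℕ)) := by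
          simp only [hkdef]
          exact fun hval => hmm (Fin.ext hval)
        simp [this, hmm]
    rw [Finset.sum_congr rfl (fun m' _ => hterm m')] at h
    simpa using h.symm
  rw [hcspan q hq]
  simp [hc0]
end

section
/- On ℝ⁸ with coordinates (x₁, …, x₈), consider the eight vector fields giving the coadjoint representation of sl(3,ℝ) (written as component lists with respect to ∂/∂x₁, …, ∂/∂x₈): X₁ = (0, −x₂, −2x₃, x₄, 0, −x₆, 2x₇, x₈), X₂ = (x₂, 0, 0, x₅−x₁, −x₂, −x₃, x₈, 0), X₃ = (2x₃, 0, 0, x₆, x₃, 0, −x₁, −x₂), X₄ = (−x₄, −x₅+x₁, −x₆, 0, x₄, 0, 0, x₇), X₅ = (0, x₂, −x₃, −x₄, 0, −2x₆, x₇, 2x₈), X₆ = (x₆, x₃, 0, 0, 2x₆, 0, −x₄, −x₅), X₇ = (−2x₇, −x₈, x₁, 0, −x₇, x₄, 0, 0), X₈ = (−x₈, 0, x₂, −x₇, −2x₈, x₅, 0, 0). Then the polynomial I₁ = x₅² + x₁² − x₁x₅ + 3x₇x₃ + 3x₈x₆ + 3x₂x₄ is a joint invariant: X_k I₁ = 0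 on ℝ⁸ for every k = 1, …, 8. -/
/-- The eight fundamental vector fields of the coadjoint representation of
`sl(3, ℝ)` on `ℝ⁸` (0-indexed coordinates `x 0, …, x 7` for `x₁, …, x₈`). -/
noncomputable def sl3CoadX : Fin 8 → (Fin 8 → ℝ) → (Fin 8 → ℝ) :=
  ![fun x => ![0, -x 1, -2 * x 2, x 3, 0, -x 5, 2 * x 6, x 7],
    fun x => ![x 1, 0, 0, x 4 - x 0, -x 1, -x 2, x 7, 0],
    fun x => ![2 * x 2, 0, 0, x 5, x 2, 0, -x 0, -x 1],
    fun x => ![-x 3, -x 4 + x 0, -x 5, 0, x 3, 0, 0, x 6],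
    fun x => ![0, x 1, -x 2, -x 3, 0, -2 * x 5, x 6, 2 * x 7],
    fun x => ![x 5, x 2, 0, 0, 2 * x 5, 0, -x 3, -x 4],
    fun x => ![-2 * x 6, -x 7, x 0, 0, -x 6, x 3, 0, 0],
    fun x => ![-x 7, 0, x 1, -x 6, -2 * x 7, x 4, 0, 0]]

/-! Every vector field acts on smooth functions as a derivation, so the Leibniz rule turns
`X_k I₁` into a quadratic polynomial in the coordinates and the components of `X_k`. That
polynomial vanishes identically: `I₁` is the quadratic Casimir of `sl(3, ℝ)`, the function on the
dual induced by the Killing form, and is therefore constant on coadjoint orbits. -/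

section Derivation

variable {n : ℕ} {X : (Fin n → ℝ) → (Fin n → ℝ)} {f g : (Fin n → ℝ) → ℝ} {q : Fin n → ℝ}

theorem vAct_const (c : ℝ) : vAct X (fun _ => c) q = 0 := by
  simp [vAct]

theorem vAct_coord (i : Fin n) : vAct X (fun x => x i) q = X q i := by
  simp [vAct, (hasFDerivAt_apply i q).fderiv]

theorem vAct_add (hf : DifferentiableAt ℝ f q) (hg : DifferentiableAt ℝ g q) :
    vAct X (fun x => f x + g x) q = vAct X f q + vAct X g q := by
  simp [vAct, fderiv_fun_add hf hg]

theorem vAct_sub (hf : DifferentiableAt ℝ f q) (hg : DifferentiableAt ℝ g q) :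
    vAct X (fun x => f x - g x) q = vAct X f q - vAct X g q := by
  simp [vAct, fderiv_fun_sub hf hg]

theorem vAct_mul (hf : DifferentiableAt ℝ f q) (hg : DifferentiableAt ℝ g q) :
    vAct X (fun x => f x * g x) q = f q * vAct X g q + g q * vAct X f q := by
  simp [vAct, fderiv_fun_mul hf hg]

theorem vAct_pow (hf : DifferentiableAt ℝ f q) (m : ℕ) :
    vAct X (fun x => f x ^ m) q = m * f q ^ (m - 1) * vAct X f q := by
  simp [vAct, fderiv_fun_pow m hf]

end Derivation

/-- The quadratic polynomial `I₁ = x₅² + x₁² − x₁x₅ + 3x₇x₃ + 3x₈x₆ + 3x₂x₄` is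
a joint invariant of the coadjoint representation of `sl(3, ℝ)`. -/
theorem sl3_coadjoint_invariant_I1 :
    ∀ k : Fin 8, ∀ x : Fin 8 → ℝ,
      vAct (sl3CoadX k)
        (fun x => x 4 ^ 2 + x 0 ^ 2 - x 0 * x 4 + 3 * x 6 * x 2 +
          3 * x 7 * x 5 + 3 * x 1 * x 3) x = 0 := by
  intro k x
  simp (disch := fun_prop) only [vAct_add, vAct_sub, vAct_mul, vAct_pow, vAct_const, vAct_coord]
  fin_cases k <;>
    simp only [sl3CoadX, Fin.reduceFinMk, Fin.zero_eta, Fin.mk_one, Matrix.cons_val] <;>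
    ring
end
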